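/- Let (R, m) be a commutative Noetherian local ring with depth(R) ≤ 1 and let M be a finitely generated R-module. Then a finitely generated free R-module F is a direct summand of M^* if and only if F is a direct summand of M. -/

import Mathlib

open IsLocalRing

universe u v

/-- The depth of a module `M` over a Noetherian local ring `(R, m)`: the supremum of the
lengths of `M`-regular sequences consisting of elements of `m`. -/
noncomputable def rdepth (R : Type*) (M : Type*) [CommRing R] [IsLocalRing R]
    [AddCommGroup M] [Module R M] : ℕ :=
  sSup {n : ℕ | ∃ rs : List R, rs.length = n ∧ (∀ r ∈ rs, r ∈ maximalIdeal R) ∧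
    RingTheory.Sequence.IsRegular M rs}

/-- `F` is a direct summand of `M`: there is a split injection `F → M`. -/
def IsDirectSummand (R : Type u) (F M : Type v) [CommRing R]
    [AddCommGroup F] [Module R F] [AddCommGroup M] [Module R M] : Prop :=
  ∃ (f : F →ₗ[R] M) (g : M →ₗ[R] F), g ∘ₗ f = LinearMap.id

/-!
If `F` is a direct summand of `M`, dualizing makes `F^* ≅ F` a direct summand of `M^*`.
Conversely, let `f : F → M^*` be split by `g`. As `F^*` is free, `F` is a summand of `M` once
`M → F^*, v ↦ (x ↦ f x v)` is onto, and by Nakayama this fails only if some `x ∈ F` outside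
`m F` has `f x` taking all its values in `m`. Depth `≤ 1` rules this out: `m` is an associated
prime of `R/(x)` for some `x` that is regular or zero, so there is `y ∉ (x)` with `y m ⊆ (x)`.
Then every `ψ : M → m` satisfies `y ψ = x φ` for some `φ ∈ M^*`, so `y Θ(ψ) = x Θ(φ)` forces
`Θ(ψ) ∈ m` for all `Θ ∈ M^**`; taking `ψ = f x` and `Θ = θ ∘ g` puts `x = g (f x)` in `m F`.
-/

open Module RingTheory.Sequence
open scoped Pointwise

section Depth

variable {R : Type*} [CommRing R] [IsNoetherianRing R] [IsLocalRing R]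

theorem exists_ne_zero_forall_smul_eq_zero_of_forall_not_isSMulRegular
    {N : Type*} [AddCommGroup N] [Module R N] [Module.Finite R N]
    (h : ∀ r ∈ maximalIdeal R, ¬ IsSMulRegular N r) :
    ∃ n : N, n ≠ 0 ∧ ∀ r ∈ maximalIdeal R, r • n = 0 := by
  obtain ⟨p, hp, hmp⟩ : ∃ p ∈ associatedPrimes R N, maximalIdeal R ≤ p :=
    (Ideal.subset_union_prime_finite (associatedPrimes.finite R N) ⊥ ⊥
      fun p hp _ _ ↦ hp.isPrime).mp <| biUnion_associatedPrimes_eq_compl_regular R N ▸ h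
  obtain ⟨hprime, n, rfl⟩ := isAssociatedPrime_iff.mp hp
  refine ⟨n, fun hn ↦ hprime.ne_top ?_, fun r hr ↦ ?_⟩
  · simp [hn]
  · simpa using hmp hr

theorem RingTheory.Sequence.IsRegular.length_le_supportDim {M : Type*} [AddCommGroup M]
    [Module R M] [Module.Finite R M] {rs : List R} (hrs : IsRegular M rs) :
    (rs.length : WithBot ℕ∞) ≤ supportDim R M := by
  have := hrs.quot_ofList_smul_nontrivial ⊤
  obtain ⟨e, he⟩ := WithBot.ne_bot_iff_exists.mp
    (supportDim_ne_bot_of_nontrivial (R := R) (M := M ⧸ Ideal.ofList rs • (⊤ : Submodule R M)))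
  rw [← supportDim_add_length_eq_supportDim_of_isRegular rs hrs, ← he]
  exact le_add_of_nonneg_left (by simp)

theorem RingTheory.Sequence.IsRegular.length_le_rdepth {M : Type*} [AddCommGroup M]
    [Module R M] [Module.Finite R M] {rs : List R} (hrs : IsRegular M rs)
    (hmem : ∀ r ∈ rs, r ∈ maximalIdeal R) : rs.length ≤ rdepth R M := by
  -- `sSup` of an unbounded set in `ℕ` is `0`, so a bound is needed: Krull's height theorem.
  refine le_csSup ⟨(maximalIdeal R).spanFinrank, ?_⟩ ⟨rs, rfl, hmem, hrs⟩
  rintro _ ⟨rs', rfl, -, hrs'⟩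
  have := (hrs'.length_le_supportDim.trans (supportDim_le_ringKrullDim R M)).trans
    (ringKrullDim_le_spanFinrank_maximalIdeal R)
  exact_mod_cast this

theorem not_isSMulRegular_quotSMulTop_of_rdepth_le_one (hdepth : rdepth R R ≤ 1) {x z : R}
    (hx : x ∈ maximalIdeal R) (hxreg : IsSMulRegular R x) (hz : z ∈ maximalIdeal R) :
    ¬ IsSMulRegular (QuotSMulTop x R) z := fun hzreg ↦ by
  have hmem : ∀ r ∈ [x, z], r ∈ maximalIdeal R := by simpa using ⟨hx, hz⟩
  have hreg : IsRegular R [x, z] := .of_isWeaklyRegular_of_mem_maximalIdeal R hmem <|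
    (isWeaklyRegular_cons_iff R x [z]).mpr ⟨hxreg, (isWeaklyRegular_singleton_iff _ z).mpr hzreg⟩
  have := hreg.length_le_rdepth hmem
  simp only [List.length_cons, List.length_nil] at this
  omega

theorem exists_notMem_span_forall_mul_mem_span (hdepth : rdepth R R ≤ 1) {x : R}
    (hx : x ∈ maximalIdeal R) (hxreg : IsSMulRegular R x) :
    ∃ y ∉ Ideal.span {x}, ∀ z ∈ maximalIdeal R, z * y ∈ Ideal.span {x} := by
  obtain ⟨n, hn, hmn⟩ := exists_ne_zero_forall_smul_eq_zero_of_forall_not_isSMulRegular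
    fun z hz ↦ not_isSMulRegular_quotSMulTop_of_rdepth_le_one hdepth hx hxreg hz
  obtain ⟨y, rfl⟩ := Submodule.mkQ_surjective _ n
  have hspan : x • (⊤ : Submodule R R) = Ideal.span {x} := by
    simp [← Submodule.ideal_span_singleton_smul]
  refine ⟨y, ?_, fun z hz ↦ ?_⟩
  · rwa [Submodule.mkQ_apply, Ne, Submodule.Quotient.mk_eq_zero, hspan] at hn
  · have := hmn z hz
    rwa [Submodule.mkQ_apply, ← Submodule.Quotient.mk_smul, Submodule.Quotient.mk_eq_zero, hspan,
      smul_eq_mul] at this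

theorem exists_mul_mem_span_of_rdepth_le_one (hdepth : rdepth R R ≤ 1) :
    ∃ x y : R, (x = 0 ∨ IsSMulRegular R x) ∧ y ∉ Ideal.span {x} ∧
      ∀ z ∈ maximalIdeal R, z * y ∈ Ideal.span {x} := by
  by_cases hreg : ∃ x ∈ maximalIdeal R, IsSMulRegular R x
  · obtain ⟨x, hx, hxreg⟩ := hreg
    obtain ⟨y, hy, hmy⟩ := exists_notMem_span_forall_mul_mem_span hdepth hx hxreg
    exact ⟨x, y, .inr hxreg, hy, hmy⟩
  · push Not at hreg
    obtain ⟨y, hy, hmy⟩ := exists_ne_zero_forall_smul_eq_zero_of_forall_not_isSMulRegular hreg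
    exact ⟨0, y, .inl rfl, by simpa using hy, fun z hz ↦ by simpa using hmy z hz⟩

end Depth

section Duality

variable {R : Type*} [CommRing R]

theorem exists_eq_smul_of_forall_mem_span {M : Type*} [AddCommGroup M] [Module R M] {x : R}
    (hx : IsSMulRegular R x) (ψ : M →ₗ[R] R) (hψ : ∀ v, ψ v ∈ Ideal.span {x}) :
    ∃ φ : M →ₗ[R] R, ψ = x • φ := by
  let e := LinearEquiv.ofInjective (LinearMap.mulLeft R x) hx
  have hrange : ∀ v, ψ v ∈ LinearMap.range (LinearMap.mulLeft R x) := fun v ↦ by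
    obtain ⟨c, hc⟩ := Ideal.mem_span_singleton'.mp (hψ v)
    exact ⟨c, by rw [LinearMap.mulLeft_apply, mul_comm, hc]⟩
  refine ⟨e.symm.toLinearMap ∘ₗ ψ.codRestrict _ hrange, LinearMap.ext fun v ↦ ?_⟩
  exact congrArg Subtype.val (e.apply_symm_apply (ψ.codRestrict _ hrange v)).symm

variable [IsLocalRing R]

theorem apply_mem_maximalIdeal_of_smul_eq_smul {P : Type*} [AddCommGroup P] [Module R P]
    (Θ : P →ₗ[R] R) {x y : R} (hy : y ∉ Ideal.span {x}) {ψ φ : P} (h : y • ψ = x • φ) :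
    Θ ψ ∈ maximalIdeal R := by
  rw [mem_maximalIdeal, mem_nonunits_iff]
  intro hu
  have hΘ : y * Θ ψ = x * Θ φ := by simpa using congrArg Θ h
  exact hy <| (Ideal.mul_unit_mem_iff_mem _ hu).mp <|
    hΘ ▸ Ideal.mul_mem_right _ _ (Ideal.mem_span_singleton_self x)

theorem apply_mem_maximalIdeal_of_rdepth_le_one [IsNoetherianRing R] (hdepth : rdepth R R ≤ 1)
    {M : Type*} [AddCommGroup M] [Module R M] (ψ : Dual R M)
    (hψ : ∀ v, ψ v ∈ maximalIdeal R) (Θ : Dual R (Dual R M)) : Θ ψ ∈ maximalIdeal R := by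
  obtain ⟨x, y, hx, hy, hmy⟩ := exists_mul_mem_span_of_rdepth_le_one hdepth
  have hyψ : ∀ v, (y • ψ) v ∈ Ideal.span {x} := fun v ↦ by
    simpa [mul_comm] using hmy _ (hψ v)
  obtain ⟨φ, hφ⟩ : ∃ φ : Dual R M, y • ψ = x • φ := by
    rcases hx with rfl | hxreg
    · exact ⟨0, LinearMap.ext fun v ↦ by simpa using hyψ v⟩
    · exact exists_eq_smul_of_forall_mem_span hxreg _ hyψ
  exact apply_mem_maximalIdeal_of_smul_eq_smul Θ hy hφ

theorem surjective_of_forall_dual_mem_maximalIdeal {M P : Type*} [AddCommGroup M] [Module R M]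
    [AddCommGroup P] [Module R P] [Module.Projective R P] [Module.Finite R P] (Φ : M →ₗ[R] P)
    (h : ∀ l : Dual R P, (∀ v, l (Φ v) ∈ maximalIdeal R) → ∀ p, l p ∈ maximalIdeal R) :
    Function.Surjective Φ := by
  rw [← LinearMap.range_eq_top, ← IsLocalRing.map_mkQ_eq_top]
  set π := (maximalIdeal R • ⊤ : Submodule R P).mkQ
  set W : Submodule (R ⧸ maximalIdeal R) (P ⧸ (maximalIdeal R • ⊤ : Submodule R P)) :=
    Submodule.span _ ((LinearMap.range Φ).map π)
  suffices W = ⊤ by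
    rwa [← Submodule.restrictScalars_eq_top_iff R,
      Submodule.restrictScalars_span R _ Ideal.Quotient.mk_surjective, Submodule.span_eq] at this
  by_contra hW
  -- the field structure on `R ⧸ m` is not a global instance
  let _ := Ideal.Quotient.field (maximalIdeal R)
  obtain ⟨μ, hμ, hμW⟩ :=
    W.exists_dual_map_eq_bot_of_lt_top (lt_top_iff_ne_top.mpr hW) inferInstance
  obtain ⟨l, hl⟩ := Module.projective_lifting_property (maximalIdeal R).mkQ
    (μ.restrictScalars R ∘ₗ π) Ideal.Quotient.mk_surjective
  have hmem : ∀ p, l p ∈ maximalIdeal R ↔ μ (π p) = 0 := fun p ↦ by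
    rw [← Submodule.Quotient.mk_eq_zero]
    exact Eq.congr_left (LinearMap.congr_fun hl p)
  have hΦ : ∀ v, l (Φ v) ∈ maximalIdeal R := fun v ↦ (hmem _).mpr <|
    LinearMap.le_ker_iff_map.mpr hμW (Submodule.subset_span ⟨Φ v, ⟨v, rfl⟩, rfl⟩)
  refine hμ (LinearMap.ext fun q ↦ ?_)
  obtain ⟨p, rfl⟩ := Submodule.mkQ_surjective _ q
  exact (hmem p).mp (h l hΦ p)

theorem surjective_flip_of_comp_eq_id [IsNoetherianRing R] (hdepth : rdepth R R ≤ 1)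
    {M F : Type*} [AddCommGroup M] [Module R M] [AddCommGroup F] [Module R F] [Module.Free R F]
    [Module.Finite R F] (f : F →ₗ[R] Dual R M) (g : Dual R M →ₗ[R] F)
    (hgf : g ∘ₗ f = LinearMap.id) : Function.Surjective f.flip := by
  refine surjective_of_forall_dual_mem_maximalIdeal _ fun l hl θ ↦ ?_
  obtain ⟨x, rfl⟩ := (evalEquiv R F).surjective l
  have hx : g (f x) = x := LinearMap.congr_fun hgf x
  simpa [hx] using apply_mem_maximalIdeal_of_rdepth_le_one hdepth (f x) hl (θ ∘ₗ g)

end Duality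

namespace IsDirectSummand

variable {R : Type u} [CommRing R] {F F' M : Type v} [AddCommGroup F] [Module R F]
  [AddCommGroup F'] [Module R F'] [AddCommGroup M] [Module R M]

theorem of_surjective [Module.Projective R F] (Φ : M →ₗ[R] F) (hΦ : Function.Surjective Φ) :
    IsDirectSummand R F M :=
  let ⟨s, hs⟩ := Module.projective_lifting_property Φ LinearMap.id hΦ
  ⟨s, Φ, hs⟩

theorem of_linearEquiv (e : F ≃ₗ[R] F') (h : IsDirectSummand R F' M) : IsDirectSummand R F M :=
  let ⟨f, g, hgf⟩ := h
  ⟨f ∘ₗ e, e.symm ∘ₗ g, by ext x; simpa using congrArg e.symm (LinearMap.congr_fun hgf (e x))⟩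

theorem dual (h : IsDirectSummand R F M) : IsDirectSummand R (Dual R F) (Dual R M) :=
  let ⟨f, g, hgf⟩ := h
  ⟨g.dualMap, f.dualMap, by rw [LinearMap.dualMap_comp_dualMap, hgf]; rfl⟩

end IsDirectSummand

theorem free_summand_dual_iff_of_depth_le_one {R : Type u} [CommRing R] [IsNoetherianRing R]
    [IsLocalRing R] (hdepth : rdepth R R ≤ 1)
    (M : Type u) [AddCommGroup M] [Module R M]
    (F : Type u) [AddCommGroup F] [Module R F] [Module.Free R F] [Module.Finite R F] :
    IsDirectSummand R F (M →ₗ[R] R) ↔ IsDirectSummand R F M := by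
  have e : F ≃ₗ[R] Dual R F := (Module.Free.chooseBasis R F).toDualEquiv
  constructor
  · rintro ⟨f, g, hgf⟩
    exact (IsDirectSummand.of_surjective _
      (surjective_flip_of_comp_eq_id hdepth f g hgf)).of_linearEquiv e
  · exact fun h ↦ h.dual.of_linearEquiv e
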